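/- arXiv:1303.1757 — 2 statements merged into one kernel-verified Lean document; each statement's English description precedes it below -/
import Mathlib

section
/- Polynomial form of Pfaff–Saalschütz: for a nonnegative integer m and complex numbers a, b, c, the sum over k from 0 to m of binomial(m,k) * (a)_k * (b)_k * (c+k)_{m-k} * (c-a-b)_{m-k} equals (c-a)_m * (c-b)_m. -/
/-- The rising factorial (Pochhammer symbol) `(a)_k`. -/
noncomputable def rf (a : ℂ) (k : ℕ) : ℂ := (ascPochhammer ℂ k).eval a

lemma rf_zero (x : ℂ) : rf x 0 = 1 := by simp [rf]

lemma rf_succ (x : ℂ) (n : ℕ) : rf x (n + 1) = rf x n * (x + n) := by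
  simp [rf, ascPochhammer_succ_eval]

lemma rf_add (x : ℂ) (i j : ℕ) : rf x (i + j) = rf x i * rf (x + i) j := by
  unfold rf
  rw [← ascPochhammer_mul, Polynomial.eval_mul, Polynomial.eval_comp]
  simp

lemma rf_vandermonde (x y : ℂ) (n : ℕ) :
    rf (x + y) n = ∑ j ∈ Finset.range (n + 1),
      (n.choose j : ℂ) * rf x j * rf y (n - j) := by
  induction n with
  | zero => simp [rf_zero]
  | succ n ih =>
    rw [rf_succ, ih, Finset.sum_mul]
    have hL : ∀ j ∈ Finset.range (n + 1),
        (n.choose j : ℂ) * rf x j * rf y (n - j) * (x + y + n)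
          = (n.choose j : ℂ) * (rf x (j + 1) * rf y (n - j))
            + (n.choose j : ℂ) * (rf x j * rf y (n - j + 1)) := by
      intro j hj
      rw [Finset.mem_range] at hj
      have hj' : j ≤ n := Nat.lt_succ_iff.mp hj
      have hc : (x + y + n) = (x + j) + (y + (n - j : ℕ)) := by
        push_cast [hj']; ring
      rw [hc, rf_succ, rf_succ]
      ring
    rw [Finset.sum_congr rfl hL, Finset.sum_add_distrib]
    -- RHS manipulation
    rw [Finset.sum_range_succ' (fun j => ((n+1).choose j : ℂ) * rf x j * rf y (n + 1 - j))]
    have hR : ∀ j ∈ Finset.range (n + 1),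
        ((n+1).choose (j+1) : ℂ) * rf x (j+1) * rf y (n + 1 - (j+1))
          = (n.choose j : ℂ) * (rf x (j+1) * rf y (n - j))
            + (n.choose (j+1) : ℂ) * (rf x (j+1) * rf y (n - j)) := by
      intro j hj
      rw [show n + 1 - (j + 1) = n - j from by omega, Nat.choose_succ_succ]
      push_cast
      ring
    rw [Finset.sum_congr rfl hR, Finset.sum_add_distrib]
    have hB : ∑ j ∈ Finset.range (n + 1), (n.choose j : ℂ) * (rf x j * rf y (n - j + 1))
        = ∑ j ∈ Finset.range (n + 1), (n.choose (j+1) : ℂ) * (rf x (j+1) * rf y (n - j))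
          + ((n+1).choose 0 : ℂ) * rf x 0 * rf y (n + 1 - 0) := by
      rw [Finset.sum_range_succ'
        (fun j => (n.choose j : ℂ) * (rf x j * rf y (n - j + 1))) n]
      rw [Finset.sum_range_succ
        (fun j => (n.choose (j+1) : ℂ) * (rf x (j+1) * rf y (n - j))) n]
      have hz : (n.choose (n+1) : ℂ) = 0 := by
        simp [Nat.choose_eq_zero_of_lt]
      rw [hz]
      have hcong : ∀ j ∈ Finset.range n,
          (n.choose (j+1) : ℂ) * (rf x (j+1) * rf y (n - (j+1) + 1))
            = (n.choose (j+1) : ℂ) * (rf x (j+1) * rf y (n - j)) := by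
        intro j hj
        rw [Finset.mem_range] at hj
        rw [show n - (j+1) + 1 = n - j from by omega]
      rw [Finset.sum_congr rfl hcong]
      simp [rf_zero]
    rw [hB]
    ring

lemma choose_swap {m k j : ℕ} (h : k + j ≤ m) :
    m.choose k * (m - k).choose j = m.choose j * (m - j).choose k := by
  have h1 := Nat.choose_mul (n := m) (k := k + j) (s := k) (Nat.le_add_right _ _)
  have h2 := Nat.choose_mul (n := m) (k := k + j) (s := j) (Nat.le_add_left _ _)
  have e1 : k + j - k = j := by omega
  have e2 : k + j - j = k := by omega
  rw [e1] at h1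
  rw [e2] at h2
  have hsym : (k + j).choose k = (k + j).choose j := by
    have := Nat.choose_symm (n := k + j) (k := k) (Nat.le_add_right _ _)
    rw [Nat.add_sub_cancel_left] at this
    exact this.symm
  rw [hsym] at h1
  omega

theorem pfaff_saalschutz_poly_form (m : ℕ) (a b c : ℂ) :
    ∑ k ∈ Finset.range (m + 1),
        (m.choose k : ℂ) * rf a k * rf b k * rf (c + k) (m - k) * rf (c - a - b) (m - k)
      = rf (c - a) m * rf (c - b) m := by
  -- define the double summand
  set T : ℕ → ℕ → ℂ := fun k j =>
    (m.choose k : ℂ) * rf a k * rf b k *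
      (((m - k).choose j : ℂ) * rf (c - a) j * rf (a + k) (m - k - j)) *
      rf (c - a - b) (m - k) with hT
  have step1 : ∑ k ∈ Finset.range (m + 1),
      (m.choose k : ℂ) * rf a k * rf b k * rf (c + k) (m - k) * rf (c - a - b) (m - k)
      = ∑ k ∈ Finset.range (m + 1), ∑ j ∈ Finset.range (m + 1), T k j := by
    apply Finset.sum_congr rfl
    intro k hk
    rw [Finset.mem_range] at hk
    have hk' : k ≤ m := Nat.lt_succ_iff.mp hk
    have hexp : rf (c + k) (m - k)
        = ∑ j ∈ Finset.range (m - k + 1),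
            (((m - k).choose j : ℂ) * rf (c - a) j * rf (a + k) (m - k - j)) := by
      have : (c + (k : ℂ)) = (c - a) + (a + k) := by ring
      rw [this, rf_vandermonde]
    rw [hexp, Finset.mul_sum, Finset.sum_mul]
    apply Finset.sum_subset
    · intro j hj
      rw [Finset.mem_range] at hj ⊢
      omega
    · intro j hj hj'
      rw [Finset.mem_range] at hj hj'
      have : (m - k).choose j = 0 := Nat.choose_eq_zero_of_lt (by omega)
      simp [hT, this]
  rw [step1, Finset.sum_comm]
  -- now outer j, inner k; shrink inner range
  have step2 : ∀ j ∈ Finset.range (m + 1),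
      ∑ k ∈ Finset.range (m + 1), T k j
        = (m.choose j : ℂ) * rf (c - a - b) j * rf a (m - j) * rf (c - a) m := by
    intro j hj
    rw [Finset.mem_range] at hj
    have hj' : j ≤ m := Nat.lt_succ_iff.mp hj
    have shrink : ∑ k ∈ Finset.range (m + 1), T k j
        = ∑ k ∈ Finset.range (m - j + 1), T k j := by
      symm
      apply Finset.sum_subset
      · intro k hk; rw [Finset.mem_range] at hk ⊢; omega
      · intro k hk hk'
        rw [Finset.mem_range] at hk hk'
        have : (m - k).choose j = 0 := Nat.choose_eq_zero_of_lt (by omega)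
        simp [hT, this]
    rw [shrink]
    have point : ∀ k ∈ Finset.range (m - j + 1),
        T k j = ((m.choose j : ℂ) * rf (c - a) j * rf a (m - j) * rf (c - a - b) j)
          * (((m - j).choose k : ℂ) * rf b k * rf (c - a - b + j) (m - j - k)) := by
      intro k hk
      rw [Finset.mem_range] at hk
      have hkj : k + j ≤ m := by omega
      have hcast : (m.choose k : ℂ) * ((m - k).choose j : ℂ)
          = (m.choose j : ℂ) * ((m - j).choose k : ℂ) := by
        rw [← Nat.cast_mul, ← Nat.cast_mul, choose_swap hkj]
      have ha : rf a k * rf (a + k) (m - k - j) = rf a (m - j) := by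
        rw [← rf_add]
        congr 1
        omega
      have hc2 : rf (c - a - b) (m - k)
          = rf (c - a - b) j * rf (c - a - b + j) (m - j - k) := by
        rw [← rf_add]
        congr 1
        omega
      rw [hT]
      simp only
      rw [hc2]
      calc (m.choose k : ℂ) * rf a k * rf b k *
            (((m - k).choose j : ℂ) * rf (c - a) j * rf (a + k) (m - k - j)) *
            (rf (c - a - b) j * rf (c - a - b + j) (m - j - k))
          = ((m.choose k : ℂ) * ((m - k).choose j : ℂ)) * (rf a k * rf (a + k) (m - k - j))
            * rf b k * rf (c - a) j * rf (c - a - b) j * rf (c - a - b + j) (m - j - k) := by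
            have : m - k - j = m - j - k := by omega
            rw [this]; ring
        _ = ((m.choose j : ℂ) * ((m - j).choose k : ℂ)) * rf a (m - j)
            * rf b k * rf (c - a) j * rf (c - a - b) j * rf (c - a - b + j) (m - j - k) := by
            have : m - k - j = m - j - k := by omega
            rw [hcast, ← ha, this]
        _ = ((m.choose j : ℂ) * rf (c - a) j * rf a (m - j) * rf (c - a - b) j)
            * (((m - j).choose k : ℂ) * rf b k * rf (c - a - b + j) (m - j - k)) := by ring
    rw [Finset.sum_congr rfl point, ← Finset.mul_sum]
    have hv : ∑ k ∈ Finset.range (m - j + 1),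
        ((m - j).choose k : ℂ) * rf b k * rf (c - a - b + j) (m - j - k)
          = rf (c - a + j) (m - j) := by
      rw [← rf_vandermonde]
      congr 1
      ring
    rw [hv]
    have hfin : rf (c - a) j * rf (c - a + j) (m - j) = rf (c - a) m := by
      rw [← rf_add]
      congr 1
      omega
    calc (m.choose j : ℂ) * rf (c - a) j * rf a (m - j) * rf (c - a - b) j
          * rf (c - a + j) (m - j)
        = (m.choose j : ℂ) * rf (c - a - b) j * rf a (m - j)
          * (rf (c - a) j * rf (c - a + j) (m - j)) := by ring
      _ = (m.choose j : ℂ) * rf (c - a - b) j * rf a (m - j) * rf (c - a) m := by rw [hfin]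
  rw [Finset.sum_congr rfl step2]
  have final : ∑ j ∈ Finset.range (m + 1),
      (m.choose j : ℂ) * rf (c - a - b) j * rf a (m - j) = rf (c - b) m := by
    rw [← rf_vandermonde]
    congr 1
    ring
  rw [← Finset.sum_mul, final, mul_comm]
end

section
/- Andrews's identity at integer points: for each integer y with 0 ≤ y ≤ 2m+1 and generic complex z, the sum Σ_{k=0}^{2m+1} (-1)^k binomial(2m+1,k) P1(k) P2(k) vanishes, where P1(k) = (y+2z+2m+2)_k (y+2z+m+1)_k / ((2z+2m+2)_k (2y+2z+1)_k) and P2(k) = (y+z+1/2)_k (z+m+1)_k / ((y/2+z+1/2)_k (y/2+z+1)_k). -/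
lemma rf_add_s11 (b : ℂ) (n m : ℕ) : rf b (n + m) = rf b n * rf (b + n) m := by
  unfold rf
  rw [← ascPochhammer_mul, Polynomial.eval_mul, Polynomial.eval_comp]
  simp

lemma rf_swap (b : ℂ) (e k : ℕ) :
    rf (b + e) k * rf b e = rf b k * rf (b + k) e := by
  have h1 := rf_add_s11 b e k
  have h2 := rf_add_s11 b k e
  rw [add_comm e k, h2] at h1
  linear_combination -h1

open Polynomial in
lemma alt_sum_eval : ∀ (n : ℕ) (P : Polynomial ℂ), P.degree < n →
    ∑ k ∈ Finset.range (n + 1), (-1 : ℂ) ^ k * (n.choose k : ℂ) * P.eval (k : ℂ) = 0 := by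
  intro n
  induction n with
  | zero =>
    intro P h
    have hP : P = 0 := by
      by_contra hne
      rw [Polynomial.degree_eq_natDegree hne] at h
      exact absurd (by exact_mod_cast h : P.natDegree < 0) (Nat.not_lt_zero _)
    simp [hP]
  | succ n ih =>
    intro P h
    set D : Polynomial ℂ := P - P.comp (X + C 1) with hD
    have hcompdeg : (P.comp (X + C 1)).natDegree = P.natDegree := by
      rw [← Polynomial.taylor_apply, Polynomial.natDegree_taylor]
    have hdeg : D.degree < n := by
      by_cases hD0 : D = 0
      · rw [hD0, Polynomial.degree_zero]
        exact WithBot.bot_lt_coe n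
      have hP0 : P ≠ 0 := by
        intro hp
        apply hD0
        rw [hD, hp]
        simp
      have hdlt : P.natDegree ≤ n := by
        have h' := (Polynomial.degree_eq_natDegree hP0) ▸ h
        exact_mod_cast Nat.lt_succ_iff.mp (by exact_mod_cast h')
      have hnd : (X + C (1:ℂ)).natDegree = 1 := Polynomial.natDegree_X_add_C 1
      have hlc : P.leadingCoeff = (P.comp (X + C 1)).leadingCoeff := by
        rw [Polynomial.leadingCoeff_comp (by rw [hnd]; exact one_ne_zero),
          (Polynomial.monic_X_add_C (1:ℂ)).leadingCoeff, one_pow, mul_one]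
      have hc0 : P.comp (X + C (1:ℂ)) ≠ 0 := Polynomial.comp_X_add_C_ne_zero_iff.mpr hP0
      have hde : P.degree = (P.comp (X + C 1)).degree := by
        rw [Polynomial.degree_eq_natDegree hP0, Polynomial.degree_eq_natDegree hc0, hcompdeg]
      calc D.degree < P.degree := Polynomial.degree_sub_lt hde hP0 hlc
        _ ≤ (P.natDegree : WithBot ℕ) := Polynomial.degree_le_natDegree
        _ ≤ (n : WithBot ℕ) := by exact_mod_cast hdlt
    have hQ := ih D hdeg
    have hDev : ∀ x : ℂ, D.eval x = P.eval x - P.eval (x + 1) := by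
      intro x; simp [hD]
    have h0 : (∑ k ∈ Finset.range (n + 1), (-1 : ℂ) ^ k * (n.choose k : ℂ) * P.eval (k : ℂ))
        - (∑ k ∈ Finset.range (n + 1), (-1 : ℂ) ^ k * (n.choose k : ℂ) * P.eval ((k : ℂ) + 1))
        = 0 := by
      rw [← Finset.sum_sub_distrib]
      rw [show (∑ k ∈ Finset.range (n + 1), ((-1 : ℂ) ^ k * (n.choose k : ℂ) * P.eval (k : ℂ)
          - (-1 : ℂ) ^ k * (n.choose k : ℂ) * P.eval ((k : ℂ) + 1)))
        = ∑ k ∈ Finset.range (n + 1), (-1 : ℂ) ^ k * (n.choose k : ℂ) * D.eval (k : ℂ) from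
        Finset.sum_congr rfl fun k _ => by rw [hDev]; ring]
      exact hQ
    have hA : (∑ k ∈ Finset.range (n + 1), (-1 : ℂ) ^ k * (n.choose k : ℂ) * P.eval (k : ℂ))
        = -(∑ k ∈ Finset.range (n + 1), (-1 : ℂ) ^ k * (n.choose (k+1) : ℂ) * P.eval ((k : ℂ) + 1))
          + P.eval 0 := by
      have ext : (∑ k ∈ Finset.range (n + 2), (-1 : ℂ) ^ k * (n.choose k : ℂ) * P.eval (k : ℂ))
          = ∑ k ∈ Finset.range (n + 1), (-1 : ℂ) ^ k * (n.choose k : ℂ) * P.eval (k : ℂ) := by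
        rw [Finset.sum_range_succ, Nat.choose_succ_self]; simp
      rw [← ext, Finset.sum_range_succ']
      rw [Finset.sum_congr rfl (fun k (_ : k ∈ Finset.range (n+1)) =>
        show (-1 : ℂ) ^ (k+1) * (n.choose (k+1) : ℂ) * P.eval ((k+1 : ℕ) : ℂ)
          = -((-1 : ℂ) ^ k * (n.choose (k+1) : ℂ) * P.eval ((k : ℂ) + 1)) by push_cast; ring)]
      rw [Finset.sum_neg_distrib]
      simp
    rw [Finset.sum_range_succ']
    rw [Finset.sum_congr rfl (fun k (_ : k ∈ Finset.range (n+1)) =>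
      show (-1 : ℂ) ^ (k+1) * ((n+1).choose (k+1) : ℂ) * P.eval ((k+1 : ℕ) : ℂ)
        = (-((-1 : ℂ) ^ k * (n.choose k : ℂ) * P.eval ((k : ℂ) + 1)))
          - ((-1 : ℂ) ^ k * (n.choose (k+1) : ℂ) * P.eval ((k : ℂ) + 1)) by
        rw [Nat.choose_succ_succ]; push_cast; ring)]
    rw [Finset.sum_sub_distrib, Finset.sum_neg_distrib]
    simp only [pow_zero, Nat.choose_zero_right, Nat.cast_one, Nat.cast_zero, one_mul]
    linear_combination h0 - hA

open Polynomial in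
lemma karlsson_minton (n : ℕ) (b1 b2 b3 b4 : ℂ) (e1 e2 e3 e4 : ℕ)
    (h1 : ∀ k ≤ n, rf b1 k ≠ 0) (h2 : ∀ k ≤ n, rf b2 k ≠ 0)
    (h3 : ∀ k ≤ n, rf b3 k ≠ 0) (h4 : ∀ k ≤ n, rf b4 k ≠ 0)
    (hlt : e1 + e2 + e3 + e4 < n) :
    ∑ k ∈ Finset.range (n + 1),
      (-1 : ℂ) ^ k * (n.choose k : ℂ) *
        (rf (b1 + e1) k * rf (b2 + e2) k / (rf b1 k * rf b2 k)) *
        (rf (b3 + e3) k * rf (b4 + e4) k / (rf b3 k * rf b4 k)) = 0 := by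
  set Q : Polynomial ℂ :=
    (ascPochhammer ℂ e1).comp (X + C b1) * ((ascPochhammer ℂ e2).comp (X + C b2) *
      ((ascPochhammer ℂ e3).comp (X + C b3) * (ascPochhammer ℂ e4).comp (X + C b4))) with hQdef
  have hb1e : rf b1 e1 ≠ 0 := h1 e1 (by omega)
  have hb2e : rf b2 e2 ≠ 0 := h2 e2 (by omega)
  have hb3e : rf b3 e3 ≠ 0 := h3 e3 (by omega)
  have hb4e : rf b4 e4 ≠ 0 := h4 e4 (by omega)
  have step : ∀ k ∈ Finset.range (n + 1),
      (-1 : ℂ) ^ k * (n.choose k : ℂ) *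
        (rf (b1 + e1) k * rf (b2 + e2) k / (rf b1 k * rf b2 k)) *
        (rf (b3 + e3) k * rf (b4 + e4) k / (rf b3 k * rf b4 k))
      = (-1 : ℂ) ^ k * (n.choose k : ℂ) * Q.eval (k : ℂ)
          / (rf b1 e1 * rf b2 e2 * rf b3 e3 * rf b4 e4) := by
    intro k hk
    have hk' : k ≤ n := by
      have := Finset.mem_range.mp hk; omega
    have hb1k : rf b1 k ≠ 0 := h1 k hk'
    have hb2k : rf b2 k ≠ 0 := h2 k hk'
    have hb3k : rf b3 k ≠ 0 := h3 k hk'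
    have hb4k : rf b4 k ≠ 0 := h4 k hk'
    have hQe : Q.eval (k : ℂ) = rf (b1 + k) e1 * (rf (b2 + k) e2 *
        (rf (b3 + k) e3 * rf (b4 + k) e4)) := by
      simp only [hQdef, eval_mul, eval_comp, eval_add, eval_X, eval_C, rf]
      rw [add_comm (k:ℂ) b1, add_comm (k:ℂ) b2, add_comm (k:ℂ) b3, add_comm (k:ℂ) b4]
    have F1 : rf (b1 + e1) k = rf b1 k * rf (b1 + k) e1 / rf b1 e1 := by
      rw [eq_div_iff hb1e]; exact rf_swap b1 e1 k
    have F2 : rf (b2 + e2) k = rf b2 k * rf (b2 + k) e2 / rf b2 e2 := by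
      rw [eq_div_iff hb2e]; exact rf_swap b2 e2 k
    have F3 : rf (b3 + e3) k = rf b3 k * rf (b3 + k) e3 / rf b3 e3 := by
      rw [eq_div_iff hb3e]; exact rf_swap b3 e3 k
    have F4 : rf (b4 + e4) k = rf b4 k * rf (b4 + k) e4 / rf b4 e4 := by
      rw [eq_div_iff hb4e]; exact rf_swap b4 e4 k
    rw [F1, F2, F3, F4, hQe]
    field_simp
  rw [Finset.sum_congr rfl step, ← Finset.sum_div]
  have hdeg : Q.degree < (n : WithBot ℕ) := by
    have c1 : ((ascPochhammer ℂ e1).comp (X + C b1)).natDegree ≤ e1 := by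
      refine le_trans (Polynomial.natDegree_comp_le) ?_
      rw [Polynomial.natDegree_X_add_C, ascPochhammer_natDegree, mul_one]
    have c2 : ((ascPochhammer ℂ e2).comp (X + C b2)).natDegree ≤ e2 := by
      refine le_trans (Polynomial.natDegree_comp_le) ?_
      rw [Polynomial.natDegree_X_add_C, ascPochhammer_natDegree, mul_one]
    have c3 : ((ascPochhammer ℂ e3).comp (X + C b3)).natDegree ≤ e3 := by
      refine le_trans (Polynomial.natDegree_comp_le) ?_
      rw [Polynomial.natDegree_X_add_C, ascPochhammer_natDegree, mul_one]
    have c4 : ((ascPochhammer ℂ e4).comp (X + C b4)).natDegree ≤ e4 := by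
      refine le_trans (Polynomial.natDegree_comp_le) ?_
      rw [Polynomial.natDegree_X_add_C, ascPochhammer_natDegree, mul_one]
    have hnd : Q.natDegree ≤ e1 + e2 + e3 + e4 := by
      calc Q.natDegree ≤ _ := Polynomial.natDegree_mul_le
        _ ≤ e1 + (e2 + (e3 + e4)) := by
            gcongr
            calc _ ≤ _ := Polynomial.natDegree_mul_le
              _ ≤ e2 + (e3 + e4) := by
                  gcongr
                  calc _ ≤ _ := Polynomial.natDegree_mul_le
                    _ ≤ e3 + e4 := by gcongr
        _ = e1 + e2 + e3 + e4 := by ring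
    calc Q.degree ≤ (Q.natDegree : WithBot ℕ) := Polynomial.degree_le_natDegree
      _ ≤ ((e1 + e2 + e3 + e4 : ℕ) : WithBot ℕ) := by exact_mod_cast hnd
      _ < (n : WithBot ℕ) := by exact_mod_cast hlt
  rw [alt_sum_eval n Q hdeg, zero_div]

theorem andrews_at_integer_points (m y : ℕ) (hy : y ≤ 2 * m + 1) (z : ℂ)
    (h1 : ∀ k ≤ 2 * m + 1, rf (2 * z + 2 * m + 2) k ≠ 0)
    (h2 : ∀ k ≤ 2 * m + 1, rf (2 * y + 2 * z + 1) k ≠ 0)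
    (h3 : ∀ k ≤ 2 * m + 1, rf ((y : ℂ) / 2 + z + 1 / 2) k ≠ 0)
    (h4 : ∀ k ≤ 2 * m + 1, rf ((y : ℂ) / 2 + z + 1) k ≠ 0) :
    ∑ k ∈ Finset.range (2 * m + 2),
        (-1 : ℂ) ^ k * ((2 * m + 1).choose k : ℂ) *
          (rf ((y : ℂ) + 2 * z + 2 * m + 2) k * rf ((y : ℂ) + 2 * z + m + 1) k /
            (rf (2 * z + 2 * m + 2) k * rf (2 * (y : ℂ) + 2 * z + 1) k)) *
          (rf ((y : ℂ) + z + 1 / 2) k * rf (z + m + 1) k /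
            (rf ((y : ℂ) / 2 + z + 1 / 2) k * rf ((y : ℂ) / 2 + z + 1) k)) = 0 := by
  rcases Nat.even_or_odd y with ⟨c, rfl⟩ | ⟨c, rfl⟩
  · rcases le_or_gt (c + c) m with hcm | hcm
    · refine Eq.trans (Finset.sum_congr rfl fun k hk => ?_)
        (karlsson_minton (2*m+1) _ _ _ _ (c+c) (m-(c+c)) c (m-c) h1 h2 h3 h4 (by omega))
      rw [show ((c+c : ℕ) : ℂ) + 2*z + 2*(m:ℂ) + 2
            = 2*z + 2*(m:ℂ) + 2 + ((c+c : ℕ) : ℂ) from by ring,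
          show ((c+c : ℕ) : ℂ) + 2*z + (m:ℂ) + 1
            = 2*((c+c : ℕ) : ℂ) + 2*z + 1 + ((m - (c+c) : ℕ) : ℂ) from by
            rw [Nat.cast_sub hcm]; push_cast; ring,
          show ((c+c : ℕ) : ℂ) + z + 1/2
            = ((c+c : ℕ) : ℂ)/2 + z + 1/2 + (c : ℂ) from by push_cast; ring,
          show z + (m:ℂ) + 1
            = ((c+c : ℕ) : ℂ)/2 + z + 1 + ((m - c : ℕ) : ℂ) from by
            rw [Nat.cast_sub (by omega : c ≤ m)]; push_cast; ring]
    · refine Eq.trans (Finset.sum_congr rfl fun k hk => ?_)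
        (karlsson_minton (2*m+1) _ _ _ _ (2*m+1-(c+c)) ((c+c)-(m+1)) c (m-c) h2 h1 h3 h4
          (by omega))
      rw [show ((c+c : ℕ) : ℂ) + 2*z + 2*(m:ℂ) + 2
            = 2*((c+c : ℕ) : ℂ) + 2*z + 1 + ((2*m+1 - (c+c) : ℕ) : ℂ) from by
            rw [Nat.cast_sub (by omega : c + c ≤ 2*m+1)]; push_cast; ring,
          show ((c+c : ℕ) : ℂ) + 2*z + (m:ℂ) + 1
            = 2*z + 2*(m:ℂ) + 2 + (((c+c) - (m+1) : ℕ) : ℂ) from by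
            rw [Nat.cast_sub (by omega : m+1 ≤ c+c)]; push_cast; ring,
          show ((c+c : ℕ) : ℂ) + z + 1/2
            = ((c+c : ℕ) : ℂ)/2 + z + 1/2 + (c : ℂ) from by push_cast; ring,
          show z + (m:ℂ) + 1
            = ((c+c : ℕ) : ℂ)/2 + z + 1 + ((m - c : ℕ) : ℂ) from by
            rw [Nat.cast_sub (by omega : c ≤ m)]; push_cast; ring]
      ring
  · rcases le_or_gt (2*c+1) m with hcm | hcm
    · refine Eq.trans (Finset.sum_congr rfl fun k hk => ?_)
        (karlsson_minton (2*m+1) _ _ _ _ (2*c+1) (m-(2*c+1)) c (m-c) h1 h2 h4 h3 (by omega))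
      rw [show ((2*c+1 : ℕ) : ℂ) + 2*z + 2*(m:ℂ) + 2
            = 2*z + 2*(m:ℂ) + 2 + ((2*c+1 : ℕ) : ℂ) from by ring,
          show ((2*c+1 : ℕ) : ℂ) + 2*z + (m:ℂ) + 1
            = 2*((2*c+1 : ℕ) : ℂ) + 2*z + 1 + ((m - (2*c+1) : ℕ) : ℂ) from by
            rw [Nat.cast_sub hcm]; push_cast; ring,
          show ((2*c+1 : ℕ) : ℂ) + z + 1/2
            = ((2*c+1 : ℕ) : ℂ)/2 + z + 1 + (c : ℂ) from by push_cast; ring,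
          show z + (m:ℂ) + 1
            = ((2*c+1 : ℕ) : ℂ)/2 + z + 1/2 + ((m - c : ℕ) : ℂ) from by
            rw [Nat.cast_sub (by omega : c ≤ m)]; push_cast; ring]
      ring
    · refine Eq.trans (Finset.sum_congr rfl fun k hk => ?_)
        (karlsson_minton (2*m+1) _ _ _ _ (2*m+1-(2*c+1)) ((2*c+1)-(m+1)) c (m-c) h2 h1 h4 h3
          (by omega))
      rw [show ((2*c+1 : ℕ) : ℂ) + 2*z + 2*(m:ℂ) + 2
            = 2*((2*c+1 : ℕ) : ℂ) + 2*z + 1 + ((2*m+1 - (2*c+1) : ℕ) : ℂ) from by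
            rw [Nat.cast_sub (by omega : 2*c+1 ≤ 2*m+1)]; push_cast; ring,
          show ((2*c+1 : ℕ) : ℂ) + 2*z + (m:ℂ) + 1
            = 2*z + 2*(m:ℂ) + 2 + (((2*c+1) - (m+1) : ℕ) : ℂ) from by
            rw [Nat.cast_sub (by omega : m+1 ≤ 2*c+1)]; push_cast; ring,
          show ((2*c+1 : ℕ) : ℂ) + z + 1/2
            = ((2*c+1 : ℕ) : ℂ)/2 + z + 1 + (c : ℂ) from by push_cast; ring,
          show z + (m:ℂ) + 1
            = ((2*c+1 : ℕ) : ℂ)/2 + z + 1/2 + ((m - c : ℕ) : ℂ) from by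
            rw [Nat.cast_sub (by omega : c ≤ m)]; push_cast; ring]
      ring
end
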